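/- Let r ≥ 1 and let a₁,…,a_r be complex numbers. Then for all λ ≥ 0, the normalized Haar measure of {z ∈ S¹ : |∏_{i=1}^r (z − a_i)| ≤ λ} is at most (8·√3/√47) · r · λ^{1/r}. -/

import Mathlib

/-!
If `‖∏ (z - aᵢ)‖ ≤ λ` then `z` lies within `t = λ^{1/r}` of some `aᵢ`, so the sublevel
set is covered by `r` discs of radius `t`. Two points of the circle in one such disc are
at chordal distance at most `2t`, while by Jordan's inequality the chord between the
images of `x, y ∈ ℝ/ℤ` is at least four times their distance in `ℝ/ℤ`. So each disc meets
the circle in an arc of normalized length at most `t`, and the measure is at most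
`r t ≤ (8√3/√47) r t`.
-/

open MeasureTheory Real Filter

noncomputable section

/-- the normalized Haar measure on the unit circle `S¹ ⊆ ℂ`, as a measure on `ℂ` -/
def circleMeasure : Measure ℂ :=
  Measure.map (fun x : ℝ => Complex.exp (2 * Real.pi * Complex.I * x))
    (volume.restrict (Set.Ioc (0:ℝ) 1))

instance : IsProbabilityMeasure circleMeasure := by
  have h1 : IsProbabilityMeasure (volume.restrict (Set.Ioc (0:ℝ) 1)) := by
    constructor
    simp [Real.volume_Ioc]
  exact Measure.isProbabilityMeasure_map
    ((Complex.continuous_exp.comp (continuous_const.mul Complex.continuous_ofReal)).aemeasurable)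

theorem exists_le_rpow_inv_card_of_prod_le {ι : Type*} [Fintype ι] [Nonempty ι] {f : ι → ℝ}
    {c : ℝ} (hf : ∀ i, 0 ≤ f i) (h : ∏ i, f i ≤ c) :
    ∃ i, f i ≤ c ^ ((Fintype.card ι : ℝ)⁻¹) := by
  obtain ⟨i, hi⟩ := Finite.exists_min f
  have hpow : f i ^ Fintype.card ι ≤ c :=
    calc f i ^ Fintype.card ι = ∏ _j : ι, f i := by rw [Finset.prod_const, Finset.card_univ]
      _ ≤ ∏ j, f j := Finset.prod_le_prod (fun _ _ => hf i) fun j _ => hi j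
      _ ≤ c := h
  refine ⟨i, ?_⟩
  rw [← Real.pow_rpow_inv_natCast (hf i) (Fintype.card_ne_zero (α := ι))]
  exact Real.rpow_le_rpow (pow_nonneg (hf i) _) hpow (by positivity)

namespace UnitAddCircle

theorem four_mul_norm_le_norm_toCircle_sub_one (x : UnitAddCircle) :
    4 * ‖x‖ ≤ ‖(x.toCircle : ℂ) - 1‖ := by
  obtain ⟨v, hv, rfl⟩ : ∃ v : ℝ, |v| ≤ 1 / 2 ∧ (v : UnitAddCircle) = x := by
    induction x using QuotientAddGroup.induction_on with | H x => ?_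
    refine ⟨x - round x, abs_sub_round x, ?_⟩
    rw [AddCircle.coe_sub, sub_eq_self, AddCircle.coe_eq_zero_iff]
    exact ⟨round x, by simp⟩
  have hjordan : 2 / π * |π * v| ≤ |sin (π * v)| := by
    apply Real.mul_abs_le_abs_sin
    rw [abs_mul, abs_of_pos pi_pos]
    nlinarith [pi_pos]
  rw [(AddCircle.norm_coe_eq_abs_iff 1 one_ne_zero).2 (by simpa using hv),
    AddCircle.toCircle_apply_mk, Circle.coe_exp, mul_comm _ Complex.I,
    Complex.norm_exp_I_mul_ofReal_sub_one, norm_mul, Real.norm_two, Real.norm_eq_abs]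
  rw [abs_mul, abs_of_pos pi_pos] at hjordan
  field_simp at hjordan ⊢
  linarith

theorem four_mul_dist_le_dist_toCircle (x y : UnitAddCircle) :
    4 * dist x y ≤ dist (x.toCircle : ℂ) (y.toCircle : ℂ) := by
  have hx : (x.toCircle : ℂ) = (x - y).toCircle * y.toCircle := by
    rw [← Circle.coe_mul, ← AddCircle.toCircle_add, sub_add_cancel]
  rw [dist_eq_norm, dist_eq_norm, hx, ← sub_one_mul, norm_mul, Circle.norm_coe, mul_one]
  exact four_mul_norm_le_norm_toCircle_sub_one (x - y)

theorem measurable_coe_toCircle : Measurable fun y : UnitAddCircle => (y.toCircle : ℂ) :=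
  (continuous_subtype_val.comp AddCircle.continuous_toCircle).measurable

end UnitAddCircle

theorem circleMeasure_eq_map_toCircle :
    circleMeasure = volume.map fun y : UnitAddCircle => (y.toCircle : ℂ) := by
  have hmk := (AddCircle.measurePreserving_mk 1 0).map_eq
  rw [zero_add] at hmk
  rw [circleMeasure, ← hmk,
    Measure.map_map UnitAddCircle.measurable_coe_toCircle measurable_quotient_mk'']
  congr 1
  ext x
  simp only [Function.comp_apply, AddCircle.toCircle_apply_mk, div_one, Circle.coe_exp,
    Complex.ofReal_mul, Complex.ofReal_ofNat, mul_right_comm _ Complex.I]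

theorem circleMeasure_closedBall_le (a : ℂ) (t : ℝ) :
    circleMeasure (Metric.closedBall a t) ≤ ENNReal.ofReal t := by
  rw [circleMeasure_eq_map_toCircle, Measure.map_apply UnitAddCircle.measurable_coe_toCircle
    Metric.isClosed_closedBall.measurableSet]
  set P := (fun y : UnitAddCircle => (y.toCircle : ℂ)) ⁻¹' Metric.closedBall a t
  rcases P.eq_empty_or_nonempty with hP | ⟨y₀, hy₀⟩
  · simp [hP]
  have hP : P ⊆ Metric.closedBall y₀ (t / 2) := fun y hy => by
    have := UnitAddCircle.four_mul_dist_le_dist_toCircle y y₀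
    have := dist_triangle_right (y.toCircle : ℂ) y₀.toCircle a
    simp only [P, Set.mem_preimage, Metric.mem_closedBall] at hy hy₀ ⊢
    linarith
  calc volume P ≤ volume (Metric.closedBall y₀ (t / 2)) := measure_mono hP
    _ = ENNReal.ofReal (min 1 (2 * (t / 2))) := AddCircle.volume_closedBall 1 _
    _ ≤ ENNReal.ofReal t := ENNReal.ofReal_le_ofReal (by linarith [min_le_right 1 (2 * (t / 2))])

theorem measure_sublevel_prod_linear_le_general (r : ℕ) (hr : 1 ≤ r) (a : Fin r → ℂ)
    (lam : ℝ) :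
    circleMeasure {z : ℂ | ‖z‖ = 1 ∧ ‖∏ i, (z - a i)‖ ≤ lam} ≤
      ENNReal.ofReal (8 * Real.sqrt 3 / Real.sqrt 47 * r * (lam ^ ((r : ℝ)⁻¹))) := by
  have : Nonempty (Fin r) := ⟨⟨0, hr⟩⟩
  set t := lam ^ ((r : ℝ)⁻¹)
  have hcover :
      {z : ℂ | ‖z‖ = 1 ∧ ‖∏ i, (z - a i)‖ ≤ lam} ⊆ ⋃ i, Metric.closedBall (a i) t := by
    rintro z ⟨-, hz⟩
    rw [norm_prod] at hz
    obtain ⟨i, hi⟩ := exists_le_rpow_inv_card_of_prod_le (fun i => norm_nonneg _) hz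
    rw [Fintype.card_fin] at hi
    exact Set.mem_iUnion.2 ⟨i, by rwa [Metric.mem_closedBall, dist_eq_norm]⟩
  have hconst : 1 ≤ 8 * √3 / √47 := by
    rw [one_le_div (by positivity)]
    have h47 : √47 ≤ 7 := Real.sqrt_le_iff.2 ⟨by norm_num, by norm_num⟩
    have h3 : 1 ≤ √3 := Real.one_le_sqrt.2 (by norm_num)
    linarith
  calc circleMeasure {z : ℂ | ‖z‖ = 1 ∧ ‖∏ i, (z - a i)‖ ≤ lam}
      ≤ ∑ i, circleMeasure (Metric.closedBall (a i) t) :=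
        (measure_mono hcover).trans (measure_iUnion_fintype_le _ _)
    _ ≤ ∑ _i : Fin r, ENNReal.ofReal t :=
        Finset.sum_le_sum fun i _ => circleMeasure_closedBall_le (a i) t
    _ = ENNReal.ofReal r * ENNReal.ofReal t := by simp
    _ ≤ ENNReal.ofReal (8 * √3 / √47 * r) * ENNReal.ofReal t := by
        gcongr
        exact le_mul_of_one_le_left r.cast_nonneg hconst
    _ = ENNReal.ofReal (8 * √3 / √47 * r * t) := (ENNReal.ofReal_mul (by positivity)).symm

/-- For `r ≥ 1`, complex numbers `a₁,…,a_r` and `λ ≥ 0`, the normalized Haar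
measure of `{z ∈ S¹ : |∏ᵢ (z − aᵢ)| ≤ λ}` is at most `(8√3/√47)·r·λ^{1/r}`. -/
theorem measure_sublevel_prod_linear_le (r : ℕ) (hr : 1 ≤ r) (a : Fin r → ℂ)
    (lam : ℝ) (hlam : 0 ≤ lam) :
    circleMeasure {z : ℂ | ‖z‖ = 1 ∧ ‖∏ i, (z - a i)‖ ≤ lam} ≤
      ENNReal.ofReal (8 * Real.sqrt 3 / Real.sqrt 47 * r * (lam ^ ((r : ℝ)⁻¹))) :=
  measure_sublevel_prod_linear_le_general r hr a lam
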